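/- Define s_R(n) = Σ_{i<0} d_i(n), the number of 1's in the fractional part of the canonical φ-representation of n. Then for every natural number n, s_R(n+1) − s_R(n) ∈ {−1, 0, 1}. -/

import Mathlib

/-- The golden ratio φ = (1+√5)/2. -/
noncomputable def phi : ℝ := (1 + Real.sqrt 5) / 2

/-- `a` is a finite φ-representation of the real number `x`: a finitely supported
function `a : ℤ → {0,1}` with `x = Σ_{i ∈ ℤ} a(i) · φ^i`. -/
def IsPhiRep (x : ℝ) (a : ℤ →₀ ℕ) : Prop :=
  (∀ i, a i ≤ 1) ∧ x = ∑ i ∈ a.support, (a i : ℝ) * phi ^ i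

/-- `a` is the canonical φ-representation of `x`: a finite φ-representation with
no two adjacent digits equal to 1. -/
def IsCanonRep (x : ℝ) (a : ℤ →₀ ℕ) : Prop :=
  IsPhiRep x a ∧ ∀ i : ℤ, a i * a (i + 1) = 0

/-- `s_R(n)`, the number of 1's in the fractional part of the canonical
φ-representation `a` of `n`. -/
def sR (a : ℤ →₀ ℕ) : ℕ := ∑ i ∈ a.support.filter (fun i => i < 0), a i

/-!
Canonical representations of naturals are built explicitly from the Lucas numbers
`L j = φ ^ j + ψ ^ j`. For `L (2k) ≤ n ≤ L (2k+1)` the digits of `n` are those of `n - L (2k)`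
together with `φ ^ (2k)` and `φ ^ (-2k)`; for `L (2k+1) < n < L (2k+2)` they are `φ ^ (2k+1)`,
`φ ^ (-(2k+2))` and the digits of `n - L (2k+1) - φ ^ (-2k)`, a number whose digits obey a
recursion of the same shape. By uniqueness of canonical representations these are the digits
of `n`. Along the recursion the numbers of negative digits of `n` and `n + 1` are shifted by the
same amount, except across the thresholds `n + 1 = L (2k)` and `n = L (2k+1)`, where both
counts are known explicitly and differ by at most one.
-/

open Real goldenRatio Finset

theorem goldenRatio_zpow_add_two (i : ℤ) : φ ^ (i + 2) = φ ^ (i + 1) + φ ^ i := by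
  rw [zpow_add₀ goldenRatio_ne_zero, zpow_add₀ goldenRatio_ne_zero, zpow_two, zpow_one,
    ← sq, goldenRatio_sq]
  ring

theorem goldenRatio_zpow_neg_two_mul_add_two (k : ℕ) :
    φ ^ (-(2 * k + 2 : ℤ)) = φ ^ (-(2 * k + 3 : ℤ)) + φ ^ (-(2 * k + 4 : ℤ)) := by
  have := goldenRatio_zpow_add_two (-(2 * k + 4))
  rwa [show -(2 * k + 4 : ℤ) + 2 = -(2 * k + 2) by ring,
    show -(2 * k + 4 : ℤ) + 1 = -(2 * k + 3) by ring] at this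

def lucas : ℕ → ℕ
  | 0 => 2
  | 1 => 1
  | n + 2 => lucas (n + 1) + lucas n

theorem lucas_add_two (n : ℕ) : lucas (n + 2) = lucas (n + 1) + lucas n := rfl

theorem lucas_pos : ∀ n, 0 < lucas n
  | 0 | 1 => by decide
  | n + 2 => Nat.add_pos_right _ (lucas_pos n)

theorem lt_lucas_add_two : ∀ n, n < lucas (n + 2)
  | 0 => by decide
  | n + 1 => by
    have := lt_lucas_add_two n
    have := lucas_pos (n + 1)
    show n + 1 < lucas (n + 2) + lucas (n + 1)
    omega

theorem lucas_cast : ∀ n : ℕ, (lucas n : ℝ) = φ ^ n + ψ ^ n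
  | 0 => by norm_num [lucas]
  | 1 => by simp [lucas, goldenRatio_add_goldenConj]
  | n + 2 => by
    rw [lucas_add_two, Nat.cast_add, lucas_cast n, lucas_cast (n + 1)]
    linear_combination (-φ ^ n) * goldenRatio_sq - ψ ^ n * goldenConj_sq

theorem goldenConj_pow (n : ℕ) : ψ ^ n = (-1) ^ n * φ ^ (-(n : ℤ)) := by
  rw [zpow_neg, zpow_natCast, ← inv_pow, inv_goldenRatio, neg_pow, one_pow, mul_one, ← mul_pow,
    neg_one_mul, neg_neg]

theorem lucas_two_mul_add_two_cast (k : ℕ) :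
    (lucas (2 * k + 2) : ℝ) = φ ^ (2 * k + 2 : ℤ) + φ ^ (-(2 * k + 2 : ℤ)) := by
  rw [lucas_cast, goldenConj_pow, (show Even (2 * k + 2) from ⟨k + 1, by ring⟩).neg_one_pow,
    one_mul, ← zpow_natCast]
  push_cast
  rfl

theorem lucas_two_mul_add_three_cast (k : ℕ) :
    (lucas (2 * k + 3) : ℝ) = φ ^ (2 * k + 3 : ℤ) - φ ^ (-(2 * k + 3 : ℤ)) := by
  rw [lucas_cast, goldenConj_pow, (show Odd (2 * k + 3) from ⟨k + 1, by ring⟩).neg_one_pow,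
    ← zpow_natCast]
  push_cast
  ring

def IsSparse (S : Finset ℤ) : Prop := ∀ i ∈ S, i + 1 ∉ S

noncomputable def phiVal (S : Finset ℤ) : ℝ := ∑ i ∈ S, φ ^ i

theorem IsSparse.subset {S T : Finset ℤ} (hT : IsSparse T) (h : S ⊆ T) : IsSparse S :=
  fun i hi hi' => hT i (h hi) (h hi')

theorem isSparse_insert {S : Finset ℤ} {a : ℤ} (hS : IsSparse S)
    (ha : ∀ i ∈ S, i + 2 ≤ a ∨ a + 2 ≤ i) : IsSparse (insert a S) := by
  intro i hi hi'
  rw [mem_insert] at hi hi'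
  rcases hi with rfl | hi <;> rcases hi' with h | hi'
  · omega
  · have := ha _ hi'; omega
  · have := ha _ hi; omega
  · exact hS i hi hi'

theorem phiVal_insert {S : Finset ℤ} {a : ℤ} (ha : a ∉ S) :
    phiVal (insert a S) = φ ^ a + phiVal S :=
  sum_insert ha

theorem zpow_le_phiVal {S : Finset ℤ} {a : ℤ} (ha : a ∈ S) : φ ^ a ≤ phiVal S :=
  single_le_sum (fun i _ => (zpow_pos goldenRatio_pos i).le) ha

theorem phiVal_lt_zpow {S : Finset ℤ} (hS : IsSparse S) {a : ℤ} (ha : ∀ i ∈ S, i < a) :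
    phiVal S < φ ^ a := by
  induction S using Finset.induction_on_max generalizing a with
  | empty => exact zpow_pos goldenRatio_pos a
  | insert b s hb ih =>
    have hbs : b ∉ s := fun h => (hb b h).false
    have hs : ∀ i ∈ s, i < b - 1 := fun i hi => by
      have : i + 1 ≠ b := fun h => hS i (mem_insert_of_mem hi) (h ▸ mem_insert_self b s)
      have := hb i hi
      omega
    have hba : b + 1 ≤ a := ha b (mem_insert_self b s)
    calc phiVal (insert b s) = φ ^ b + phiVal s := phiVal_insert hbs
      _ < φ ^ b + φ ^ (b - 1) := by
        gcongr; exact ih (hS.subset (subset_insert b s)) hs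
      _ = φ ^ (b + 1) := by
        have := goldenRatio_zpow_add_two (b - 1)
        rwa [sub_add_cancel, show b - 1 + 2 = b + 1 by ring, eq_comm] at this
      _ ≤ φ ^ a := zpow_le_zpow_right₀ one_lt_goldenRatio.le hba

theorem IsSparse.eq_of_phiVal_eq {S T : Finset ℤ} (hS : IsSparse S) (hT : IsSparse T)
    (h : phiVal S = phiVal T) : S = T := by
  induction S using Finset.induction_on_max generalizing T with
  | empty =>
    refine (eq_empty_of_forall_notMem fun i hi => ?_).symm
    have := zpow_le_phiVal hi
    rw [← h, phiVal, sum_empty] at this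
    exact (zpow_pos goldenRatio_pos i).not_ge this
  | insert a s hs ih =>
    have hS' : IsSparse s := hS.subset (subset_insert a s)
    have hlt : phiVal (insert a s) < φ ^ (a + 1) := phiVal_lt_zpow hS fun i hi => by
      rcases mem_insert.1 hi with rfl | hi
      · omega
      · have := hs i hi; omega
    -- the top exponent of a sparse set is determined by its value
    have hTa : ∀ i ∈ T, i < a + 1 := fun i hi => by
      by_contra hia
      have := (zpow_le_zpow_right₀ one_lt_goldenRatio.le (not_lt.1 hia)).trans (zpow_le_phiVal hi)
      linarith
    have ha : a ∈ T := by
      by_contra ha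
      have := phiVal_lt_zpow hT fun i hi => lt_of_le_of_ne (Int.lt_add_one_iff.1 (hTa i hi))
        (ne_of_mem_of_not_mem hi ha)
      linarith [zpow_le_phiVal (mem_insert_self a s)]
    rw [← insert_erase ha] at h ⊢
    rw [phiVal_insert (fun h => (hs a h).false), phiVal_insert (notMem_erase a T),
      add_right_inj] at h
    rw [ih hS' (hT.subset (erase_subset a T)) h]

def IsRepOn (S : Finset ℤ) (x : ℝ) (lo hi : ℤ) : Prop :=
  IsSparse S ∧ phiVal S = x ∧ ∀ i ∈ S, lo ≤ i ∧ i ≤ hi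

section IsRepOn

variable {S : Finset ℤ} {x : ℝ} {lo hi a : ℤ}

theorem IsRepOn.mono {lo' hi' : ℤ} (h : IsRepOn S x lo hi) (hlo : lo' ≤ lo) (hhi : hi ≤ hi') :
    IsRepOn S x lo' hi' :=
  ⟨h.1, h.2.1, fun i hi => ⟨hlo.trans (h.2.2 i hi).1, (h.2.2 i hi).2.trans hhi⟩⟩

theorem IsRepOn.congr {y : ℝ} (h : IsRepOn S x lo hi) (hxy : x = y) : IsRepOn S y lo hi :=
  hxy ▸ h

theorem IsRepOn.insert_above (h : IsRepOn S x lo hi) (ha : hi + 2 ≤ a) (hlo : lo ≤ a) :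
    IsRepOn (insert a S) (φ ^ a + x) lo a := by
  obtain ⟨hS, hx, hb⟩ := h
  refine ⟨isSparse_insert hS fun i hi => ?_, ?_, ?_⟩
  · have := hb i hi; omega
  · rw [phiVal_insert fun h => by have := hb a h; omega, hx]
  · intro i hi
    rcases mem_insert.1 hi with rfl | hi
    · omega
    · have := hb i hi; omega

theorem IsRepOn.insert_below (h : IsRepOn S x lo hi) (ha : a + 2 ≤ lo) (hhi : a ≤ hi) :
    IsRepOn (insert a S) (φ ^ a + x) a hi := by
  obtain ⟨hS, hx, hb⟩ := h
  refine ⟨isSparse_insert hS fun i hi => ?_, ?_, ?_⟩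
  · have := hb i hi; omega
  · rw [phiVal_insert fun h => by have := hb a h; omega, hx]
  · intro i hi
    rcases mem_insert.1 hi with rfl | hi
    · omega
    · have := hb i hi; omega

theorem IsRepOn.notMem_of_lt (h : IsRepOn S x lo hi) (ha : a < lo) : a ∉ S :=
  fun hS => (h.2.2 a hS).1.not_gt ha

end IsRepOn

mutual

/-- `phiRep k n` is the canonical representation of `n` for `n < lucas (2 * k + 2)`, and
`phiRepSub k m` that of `m - φ ^ (-(2 * k + 2))` for `1 ≤ m < lucas (2 * k + 2)`; the recursion
rests on `lucas (2 * k + 2) = φ ^ (2 * k + 2) + φ ^ (-(2 * k + 2))` and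
`lucas (2 * k + 3) = φ ^ (2 * k + 3) - φ ^ (-(2 * k + 3))`. -/
def phiRep : ℕ → ℕ → Finset ℤ
  | 0, n => if n = 0 then ∅ else if n = 1 then {0} else {1, -2}
  | k + 1, n =>
    if n < lucas (2 * k + 2) then phiRep k n
    else if n ≤ lucas (2 * k + 3) then
      insert (2 * k + 2 : ℤ) (insert (-(2 * k + 2) : ℤ) (phiRep k (n - lucas (2 * k + 2))))
    else
      insert (2 * k + 3 : ℤ) (insert (-(2 * k + 4) : ℤ) (phiRepSub k (n - lucas (2 * k + 3))))

def phiRepSub : ℕ → ℕ → Finset ℤ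
  | 0, m => if m = 1 then {-1} else {1}
  | k + 1, m =>
    if m < lucas (2 * k + 2) then insert (-(2 * k + 3) : ℤ) (phiRepSub k m)
    else if m ≤ lucas (2 * k + 3) then
      insert (2 * k + 2 : ℤ) (insert (-(2 * k + 3) : ℤ) (phiRep k (m - lucas (2 * k + 2))))
    else insert (2 * k + 3 : ℤ) (phiRepSub k (m - lucas (2 * k + 3)))

end

section Unfold

variable {k n : ℕ}

theorem phiRep_succ_low (h : n < lucas (2 * k + 2)) : phiRep (k + 1) n = phiRep k n := by
  rw [phiRep, if_pos h]

theorem phiRep_succ_mid (h₁ : lucas (2 * k + 2) ≤ n) (h₂ : n ≤ lucas (2 * k + 3)) :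
    phiRep (k + 1) n =
      insert (2 * k + 2 : ℤ)
        (insert (-(2 * k + 2) : ℤ) (phiRep k (n - lucas (2 * k + 2)))) := by
  rw [phiRep, if_neg h₁.not_gt, if_pos h₂]

theorem phiRep_succ_high (h : lucas (2 * k + 3) < n) :
    phiRep (k + 1) n =
      insert (2 * k + 3 : ℤ)
        (insert (-(2 * k + 4) : ℤ) (phiRepSub k (n - lucas (2 * k + 3)))) := by
  have : lucas (2 * k + 2) ≤ lucas (2 * k + 3) := Nat.le_add_right _ _
  rw [phiRep, if_neg (by omega), if_neg h.not_ge]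

theorem phiRepSub_succ_low (h : n < lucas (2 * k + 2)) :
    phiRepSub (k + 1) n = insert (-(2 * k + 3) : ℤ) (phiRepSub k n) := by
  rw [phiRepSub, if_pos h]

theorem phiRepSub_succ_mid (h₁ : lucas (2 * k + 2) ≤ n) (h₂ : n ≤ lucas (2 * k + 3)) :
    phiRepSub (k + 1) n =
      insert (2 * k + 2 : ℤ)
        (insert (-(2 * k + 3) : ℤ) (phiRep k (n - lucas (2 * k + 2)))) := by
  rw [phiRepSub, if_neg h₁.not_gt, if_pos h₂]

theorem phiRepSub_succ_high (h : lucas (2 * k + 3) < n) :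
    phiRepSub (k + 1) n = insert (2 * k + 3 : ℤ) (phiRepSub k (n - lucas (2 * k + 3))) := by
  have : lucas (2 * k + 2) ≤ lucas (2 * k + 3) := Nat.le_add_right _ _
  rw [phiRepSub, if_neg (by omega), if_neg h.not_ge]

end Unfold

theorem phiRep_zero_right : ∀ k, phiRep k 0 = ∅
  | 0 => rfl
  | k + 1 => by rw [phiRep_succ_low (lucas_pos _), phiRep_zero_right k]

theorem isRepOn_empty {lo hi : ℤ} : IsRepOn ∅ 0 lo hi :=
  ⟨fun _ h => absurd h (notMem_empty _), sum_empty, fun _ h => absurd h (notMem_empty _)⟩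

theorem isRepOn_singleton (a : ℤ) : IsRepOn {a} (φ ^ a) a a := by
  refine ⟨fun i hi hi' => ?_, sum_singleton _ _, fun i hi => ?_⟩
  · rw [mem_singleton] at hi hi'; omega
  · rw [mem_singleton] at hi; omega

def LevelSpec (k : ℕ) : Prop :=
  (∀ n, n < lucas (2 * k + 2) → IsRepOn (phiRep k n) n (-(2 * k + 2)) (2 * k + 1)) ∧
  (∀ n, n ≤ lucas (2 * k + 1) → IsRepOn (phiRep k n) n (-(2 * k)) (2 * k)) ∧
  (∀ m, 1 ≤ m → m < lucas (2 * k + 2) →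
    IsRepOn (phiRepSub k m) (m - φ ^ (-(2 * k + 2 : ℤ))) (-(2 * k + 1)) (2 * k + 1))

theorem levelSpec_zero : LevelSpec 0 := by
  have h₀ := goldenRatio_zpow_add_two (-2)
  have h₁ := goldenRatio_zpow_add_two (-1)
  simp only [Int.reduceAdd, zpow_zero] at h₀ h₁
  have hL : lucas (2 * 0 + 2) = 3 := rfl
  refine ⟨fun n hn => ?_, fun n hn => ?_, fun m hm₁ hm₂ => ?_⟩
  · rw [hL] at hn
    interval_cases n <;> simp only [phiRep, Nat.reduceEqDiff, if_true, if_false]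
    · exact isRepOn_empty.congr (by simp)
    · exact ((isRepOn_singleton 0).mono (by norm_num) (by norm_num)).congr (by simp)
    · exact ((isRepOn_singleton (-2)).insert_above (a := 1) (by norm_num) (by norm_num)).congr
        (by push_cast; linarith)
  · have hn : n ≤ 1 := hn
    interval_cases n <;> simp only [phiRep, Nat.reduceEqDiff, if_true, if_false]
    · exact isRepOn_empty.congr (by simp)
    · exact (isRepOn_singleton 0).congr (by simp)
  · rw [hL] at hm₂
    interval_cases m <;> simp only [phiRepSub, Nat.reduceEqDiff, if_true, if_false]
    · exact ((isRepOn_singleton (-1)).mono le_rfl (by norm_num)).congr (by push_cast; linarith)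
    · exact ((isRepOn_singleton 1).mono (by norm_num) le_rfl).congr (by push_cast; linarith)

namespace LevelSpec

variable {k : ℕ} (h : LevelSpec k)
include h

theorem isRepOn_phiRep_succ_of_le {n : ℕ} (hn : n ≤ lucas (2 * k + 3)) :
    IsRepOn (phiRep (k + 1) n) n (-(2 * k + 2)) (2 * k + 2) := by
  have hL₂ : lucas (2 * k + 2) = lucas (2 * k + 1) + lucas (2 * k) := rfl
  have hL₃ : lucas (2 * k + 3) = lucas (2 * k + 2) + lucas (2 * k + 1) := rfl
  rcases lt_or_ge n (lucas (2 * k + 2)) with hlow | hmid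
  · rw [phiRep_succ_low hlow]
    exact (h.1 n hlow).mono le_rfl (by omega)
  · rw [phiRep_succ_mid hmid hn]
    refine (((h.2.1 _ (by omega)).insert_below (a := -(2 * k + 2)) (by omega)
      (by omega)).insert_above (a := 2 * k + 2) (by omega) (by omega)).congr ?_
    rw [Nat.cast_sub hmid, lucas_two_mul_add_two_cast]
    ring

theorem isRepOn_phiRep_succ {n : ℕ} (hn : n < lucas (2 * k + 4)) :
    IsRepOn (phiRep (k + 1) n) n (-(2 * k + 4)) (2 * k + 3) := by
  have hL₄ : lucas (2 * k + 4) = lucas (2 * k + 3) + lucas (2 * k + 2) := rfl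
  rcases le_or_gt n (lucas (2 * k + 3)) with hle | hhigh
  · exact (h.isRepOn_phiRep_succ_of_le hle).mono (by omega) (by omega)
  · rw [phiRep_succ_high hhigh]
    refine (((h.2.2 _ (by omega) (by omega)).insert_below (a := -(2 * k + 4)) (by omega)
      (by omega)).insert_above (a := 2 * k + 3) (by omega) (by omega)).congr ?_
    rw [Nat.cast_sub hhigh.le, lucas_two_mul_add_three_cast]
    linarith [goldenRatio_zpow_neg_two_mul_add_two k]

theorem isRepOn_phiRepSub_succ {m : ℕ} (hm₁ : 1 ≤ m) (hm₂ : m < lucas (2 * k + 4)) :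
    IsRepOn (phiRepSub (k + 1) m) (m - φ ^ (-(2 * k + 4 : ℤ))) (-(2 * k + 3)) (2 * k + 3) := by
  have hL₂ : lucas (2 * k + 2) = lucas (2 * k + 1) + lucas (2 * k) := rfl
  have hL₃ : lucas (2 * k + 3) = lucas (2 * k + 2) + lucas (2 * k + 1) := rfl
  have hL₄ : lucas (2 * k + 4) = lucas (2 * k + 3) + lucas (2 * k + 2) := rfl
  have hsplit := goldenRatio_zpow_neg_two_mul_add_two k
  rcases lt_or_ge m (lucas (2 * k + 2)) with hlow | hmid
  · rw [phiRepSub_succ_low hlow]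
    refine (((h.2.2 m hm₁ hlow).insert_below (a := -(2 * k + 3)) (by omega) (by omega)).mono
      le_rfl (by omega)).congr (by linarith)
  rcases le_or_gt m (lucas (2 * k + 3)) with hle | hhigh
  · rw [phiRepSub_succ_mid hmid hle]
    refine (((h.2.1 _ (by omega)).insert_below (a := -(2 * k + 3)) (by omega)
      (by omega)).insert_above (a := 2 * k + 2) (by omega) (by omega)).mono le_rfl (by omega)
      |>.congr ?_
    rw [Nat.cast_sub hmid, lucas_two_mul_add_two_cast]
    linarith
  · rw [phiRepSub_succ_high hhigh]
    refine ((h.2.2 _ (by omega) (by omega)).insert_above (a := 2 * k + 3) (by omega)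
      (by omega)).mono (by omega) le_rfl |>.congr ?_
    rw [Nat.cast_sub hhigh.le, lucas_two_mul_add_three_cast]
    linarith

theorem succ : LevelSpec (k + 1) := by
  refine ⟨fun n hn => ?_, fun n hn => ?_, fun m hm₁ hm₂ => ?_⟩
  · exact (h.isRepOn_phiRep_succ hn).mono (by push_cast; omega) (by push_cast; omega)
  · exact (h.isRepOn_phiRep_succ_of_le hn).mono (by push_cast; omega) (by push_cast; omega)
  · refine ((h.isRepOn_phiRepSub_succ hm₁ hm₂).mono (by push_cast; omega)
      (by push_cast; omega)).congr ?_
    push_cast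
    ring_nf

end LevelSpec

theorem levelSpec (k : ℕ) : LevelSpec k :=
  Nat.rec levelSpec_zero (fun _ h => h.succ) k

def negCount (S : Finset ℤ) : ℕ := #(S.filter (· < 0))

theorem negCount_insert_of_neg {S : Finset ℤ} {a : ℤ} (ha : a ∉ S) (h : a < 0) :
    negCount (insert a S) = negCount S + 1 := by
  rw [negCount, filter_insert, if_pos h, card_insert_of_notMem (fun h => ha (mem_filter.1 h).1)]
  rfl

theorem negCount_insert_of_nonneg {S : Finset ℤ} {a : ℤ} (h : 0 ≤ a) :
    negCount (insert a S) = negCount S := by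
  rw [negCount, filter_insert, if_neg h.not_gt]
  rfl

section Counts

variable {k n : ℕ}

theorem negCount_phiRep_succ_mid (h₁ : lucas (2 * k + 2) ≤ n) (h₂ : n ≤ lucas (2 * k + 3)) :
    negCount (phiRep (k + 1) n) = negCount (phiRep k (n - lucas (2 * k + 2))) + 1 := by
  have hL₃ : lucas (2 * k + 3) = lucas (2 * k + 2) + lucas (2 * k + 1) := rfl
  rw [phiRep_succ_mid h₁ h₂, negCount_insert_of_nonneg (by omega), negCount_insert_of_neg
    (((levelSpec k).2.1 _ (by omega)).notMem_of_lt (by omega)) (by omega)]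

theorem negCount_phiRep_succ_high (h₁ : lucas (2 * k + 3) < n) (h₂ : n < lucas (2 * k + 4)) :
    negCount (phiRep (k + 1) n) = negCount (phiRepSub k (n - lucas (2 * k + 3))) + 1 := by
  have hL₄ : lucas (2 * k + 4) = lucas (2 * k + 3) + lucas (2 * k + 2) := rfl
  rw [phiRep_succ_high h₁, negCount_insert_of_nonneg (by omega), negCount_insert_of_neg
    (((levelSpec k).2.2 _ (by omega) (by omega)).notMem_of_lt (by omega)) (by omega)]

theorem negCount_phiRepSub_succ_low (h₁ : 1 ≤ n) (h₂ : n < lucas (2 * k + 2)) :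
    negCount (phiRepSub (k + 1) n) = negCount (phiRepSub k n) + 1 := by
  rw [phiRepSub_succ_low h₂, negCount_insert_of_neg
    (((levelSpec k).2.2 _ h₁ h₂).notMem_of_lt (by omega)) (by omega)]

theorem negCount_phiRepSub_succ_mid (h₁ : lucas (2 * k + 2) ≤ n)
    (h₂ : n ≤ lucas (2 * k + 3)) :
    negCount (phiRepSub (k + 1) n) = negCount (phiRep k (n - lucas (2 * k + 2))) + 1 := by
  have hL₃ : lucas (2 * k + 3) = lucas (2 * k + 2) + lucas (2 * k + 1) := rfl
  rw [phiRepSub_succ_mid h₁ h₂, negCount_insert_of_nonneg (by omega), negCount_insert_of_neg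
    (((levelSpec k).2.1 _ (by omega)).notMem_of_lt (by omega)) (by omega)]

theorem negCount_phiRepSub_succ_high (h : lucas (2 * k + 3) < n) :
    negCount (phiRepSub (k + 1) n) = negCount (phiRepSub k (n - lucas (2 * k + 3))) := by
  rw [phiRepSub_succ_high h, negCount_insert_of_nonneg (by omega)]

end Counts

theorem negCount_phiRep_lucas_odd : ∀ k, negCount (phiRep k (lucas (2 * k + 1))) = k
  | 0 => rfl
  | k + 1 => by
    have hL₃ : lucas (2 * k + 3) = lucas (2 * k + 2) + lucas (2 * k + 1) := rfl
    show negCount (phiRep (k + 1) (lucas (2 * k + 3))) = k + 1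
    rw [negCount_phiRep_succ_mid (by omega) le_rfl, hL₃, Nat.add_sub_cancel_left,
      negCount_phiRep_lucas_odd k]

theorem negCount_phiRepSub_one : ∀ k, negCount (phiRepSub k 1) = k + 1
  | 0 => rfl
  | k + 1 => by
    have hL₂ : lucas (2 * k + 2) = lucas (2 * k + 1) + lucas (2 * k) := rfl
    have := lucas_pos (2 * k)
    have := lucas_pos (2 * k + 1)
    rw [negCount_phiRepSub_succ_low le_rfl (by omega), negCount_phiRepSub_one k]

theorem negCount_phiRepSub_lucas_sub_one :
    ∀ k, negCount (phiRepSub k (lucas (2 * k + 2) - 1)) = 0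
  | 0 => rfl
  | k + 1 => by
    have hL₂ : lucas (2 * k + 2) = lucas (2 * k + 1) + lucas (2 * k) := rfl
    have hL₄ : lucas (2 * k + 4) = lucas (2 * k + 3) + lucas (2 * k + 2) := rfl
    have := lucas_pos (2 * k)
    have := lucas_pos (2 * k + 1)
    show negCount (phiRepSub (k + 1) (lucas (2 * k + 4) - 1)) = 0
    rw [negCount_phiRepSub_succ_high (by omega),
      show lucas (2 * k + 4) - 1 - lucas (2 * k + 3) = lucas (2 * k + 2) - 1 by omega,
      negCount_phiRepSub_lucas_sub_one k]

theorem negCount_phiRep_lucas_sub_one : ∀ k, negCount (phiRep k (lucas (2 * k + 2) - 1)) = 1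
  | 0 => rfl
  | k + 1 => by
    have hL₂ : lucas (2 * k + 2) = lucas (2 * k + 1) + lucas (2 * k) := rfl
    have hL₄ : lucas (2 * k + 4) = lucas (2 * k + 3) + lucas (2 * k + 2) := rfl
    have := lucas_pos (2 * k)
    have := lucas_pos (2 * k + 1)
    show negCount (phiRep (k + 1) (lucas (2 * k + 4) - 1)) = 1
    rw [negCount_phiRep_succ_high (by omega) (by omega),
      show lucas (2 * k + 4) - 1 - lucas (2 * k + 3) = lucas (2 * k + 2) - 1 by omega,
      negCount_phiRepSub_lucas_sub_one k]

section Step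

variable {k : ℕ}
  (hrep : ∀ n, n + 1 < lucas (2 * k + 2) →
    (negCount (phiRep k (n + 1))).dist (negCount (phiRep k n)) ≤ 1)
  (hsub : ∀ m, 1 ≤ m → m + 1 < lucas (2 * k + 2) →
    (negCount (phiRepSub k (m + 1))).dist (negCount (phiRepSub k m)) ≤ 1)
include hrep hsub

theorem dist_negCount_phiRep_succ {n : ℕ} (hn : n + 1 < lucas (2 * k + 4)) :
    (negCount (phiRep (k + 1) (n + 1))).dist (negCount (phiRep (k + 1) n)) ≤ 1 := by
  have hL₂ : lucas (2 * k + 2) = lucas (2 * k + 1) + lucas (2 * k) := rfl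
  have hL₃ : lucas (2 * k + 3) = lucas (2 * k + 2) + lucas (2 * k + 1) := rfl
  have hL₄ : lucas (2 * k + 4) = lucas (2 * k + 3) + lucas (2 * k + 2) := rfl
  have := lucas_pos (2 * k)
  have := lucas_pos (2 * k + 1)
  rcases lt_trichotomy (n + 1) (lucas (2 * k + 2)) with hlow | hL | hn₂
  · rw [phiRep_succ_low hlow, phiRep_succ_low (by omega)]
    exact hrep n hlow
  · rw [negCount_phiRep_succ_mid (by omega) (by omega), phiRep_succ_low (by omega), hL,
      Nat.sub_self, phiRep_zero_right, show n = lucas (2 * k + 2) - 1 by omega,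
      negCount_phiRep_lucas_sub_one]
    decide
  rcases lt_trichotomy n (lucas (2 * k + 3)) with hmid | rfl | hhigh
  · rw [negCount_phiRep_succ_mid (by omega) (by omega), negCount_phiRep_succ_mid (by omega)
      hmid.le, show n + 1 - lucas (2 * k + 2) = n - lucas (2 * k + 2) + 1 by omega,
      Nat.dist_add_add_right]
    exact hrep _ (by omega)
  · rw [negCount_phiRep_succ_high (by omega) hn, negCount_phiRep_succ_mid (by omega) le_rfl,
      Nat.add_sub_cancel_left, hL₃, Nat.add_sub_cancel_left, negCount_phiRepSub_one,
      negCount_phiRep_lucas_odd]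
    simp only [Nat.dist]
    omega
  · rw [negCount_phiRep_succ_high (by omega) hn, negCount_phiRep_succ_high hhigh (by omega),
      show n + 1 - lucas (2 * k + 3) = n - lucas (2 * k + 3) + 1 by omega,
      Nat.dist_add_add_right]
    exact hsub _ (by omega) (by omega)

theorem dist_negCount_phiRepSub_succ {m : ℕ} (hm₁ : 1 ≤ m)
    (hm₂ : m + 1 < lucas (2 * k + 4)) :
    (negCount (phiRepSub (k + 1) (m + 1))).dist (negCount (phiRepSub (k + 1) m)) ≤ 1 := by
  have hL₂ : lucas (2 * k + 2) = lucas (2 * k + 1) + lucas (2 * k) := rfl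
  have hL₃ : lucas (2 * k + 3) = lucas (2 * k + 2) + lucas (2 * k + 1) := rfl
  have hL₄ : lucas (2 * k + 4) = lucas (2 * k + 3) + lucas (2 * k + 2) := rfl
  have := lucas_pos (2 * k)
  have := lucas_pos (2 * k + 1)
  rcases lt_trichotomy (m + 1) (lucas (2 * k + 2)) with hlow | hL | hm₃
  · rw [negCount_phiRepSub_succ_low (by omega) hlow, negCount_phiRepSub_succ_low hm₁ (by omega),
      Nat.dist_add_add_right]
    exact hsub m hm₁ hlow
  · rw [negCount_phiRepSub_succ_mid (by omega) (by omega),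
      negCount_phiRepSub_succ_low hm₁ (by omega), hL, Nat.sub_self, phiRep_zero_right,
      show m = lucas (2 * k + 2) - 1 by omega, negCount_phiRepSub_lucas_sub_one]
    decide
  rcases lt_trichotomy m (lucas (2 * k + 3)) with hmid | rfl | hhigh
  · rw [negCount_phiRepSub_succ_mid (by omega) (by omega), negCount_phiRepSub_succ_mid
      (by omega) hmid.le, show m + 1 - lucas (2 * k + 2) = m - lucas (2 * k + 2) + 1 by omega,
      Nat.dist_add_add_right]
    exact hrep _ (by omega)
  · rw [negCount_phiRepSub_succ_high (by omega), negCount_phiRepSub_succ_mid (by omega) le_rfl,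
      Nat.add_sub_cancel_left, hL₃, Nat.add_sub_cancel_left, negCount_phiRepSub_one,
      negCount_phiRep_lucas_odd]
    simp only [Nat.dist]
    omega
  · rw [negCount_phiRepSub_succ_high (by omega), negCount_phiRepSub_succ_high hhigh,
      show m + 1 - lucas (2 * k + 3) = m - lucas (2 * k + 3) + 1 by omega]
    exact hsub _ (by omega) (by omega)

end Step

theorem dist_negCount_le_one (k : ℕ) :
    (∀ n, n + 1 < lucas (2 * k + 2) →
      (negCount (phiRep k (n + 1))).dist (negCount (phiRep k n)) ≤ 1) ∧
    (∀ m, 1 ≤ m → m + 1 < lucas (2 * k + 2) →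
      (negCount (phiRepSub k (m + 1))).dist (negCount (phiRepSub k m)) ≤ 1) := by
  induction k with
  | zero =>
    refine ⟨fun n hn => ?_, fun m hm₁ hm₂ => ?_⟩
    · have : n < 2 := by change n + 1 < 3 at hn; omega
      interval_cases n <;> decide
    · have : m < 2 := by change m + 1 < 3 at hm₂; omega
      interval_cases m; decide
  | succ k ih =>
    exact ⟨fun n hn => dist_negCount_phiRep_succ ih.1 ih.2 hn,
      fun m hm₁ hm₂ => dist_negCount_phiRepSub_succ ih.1 ih.2 hm₁ hm₂⟩

section CanonRep

variable {x : ℝ} {a : ℤ →₀ ℕ}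

theorem IsCanonRep.eq_one_of_mem_support (h : IsCanonRep x a) {i : ℤ} (hi : i ∈ a.support) :
    a i = 1 :=
  le_antisymm (h.1.1 i) (Nat.one_le_iff_ne_zero.2 (Finsupp.mem_support_iff.1 hi))

theorem IsCanonRep.isSparse_support (h : IsCanonRep x a) : IsSparse a.support := by
  intro i hi hi'
  have := h.2 i
  rw [h.eq_one_of_mem_support hi, h.eq_one_of_mem_support hi'] at this
  exact one_ne_zero this

theorem IsCanonRep.phiVal_support (h : IsCanonRep x a) : phiVal a.support = x := by
  rw [h.1.2, phiVal]
  refine sum_congr rfl fun i hi => ?_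
  rw [h.eq_one_of_mem_support hi, Nat.cast_one, one_mul]
  rfl

theorem IsCanonRep.sR_eq_negCount (h : IsCanonRep x a) : sR a = negCount a.support := by
  rw [sR, negCount, card_eq_sum_ones]
  exact sum_congr rfl fun i hi => h.eq_one_of_mem_support (mem_filter.1 hi).1

theorem IsCanonRep.support_eq_phiRep {n k : ℕ} (h : IsCanonRep n a)
    (hn : n < lucas (2 * k + 2)) : a.support = phiRep k n :=
  have hrep := (levelSpec k).1 n hn
  h.isSparse_support.eq_of_phiVal_eq hrep.1 (h.phiVal_support.trans hrep.2.1.symm)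

end CanonRep

/-- The first difference of `s_R` takes values in {-1, 0, 1}. Here `d n` denotes the
canonical φ-representation of `n`. -/
theorem sR_diff_mem
    (d : ℕ → ℤ →₀ ℕ) (hd : ∀ n : ℕ, IsCanonRep n (d n)) (n : ℕ) :
    (sR (d (n + 1)) : ℤ) - (sR (d n) : ℤ) ∈ ({-1, 0, 1} : Set ℤ) := by
  have hn : n + 1 < lucas (2 * (n + 1) + 2) := (by omega : n + 1 ≤ 2 * n + 2).trans_lt
    (lt_lucas_add_two (2 * n + 2))
  have hdist := (dist_negCount_le_one (n + 1)).1 n hn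
  rw [← (hd n).support_eq_phiRep (by omega), ← (hd (n + 1)).support_eq_phiRep hn,
    ← (hd n).sR_eq_negCount, ← (hd (n + 1)).sR_eq_negCount] at hdist
  simp only [Nat.dist, Set.mem_insert_iff, Set.mem_singleton_iff] at hdist ⊢
  omega
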